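/- Shifted dual Radon transform of the Radon transform via matrix spherical means: Let m ≥ 1, 1 ≤ k ≤ n−m (so n ≥ m), and let f : M_{n,m} → [0,∞] be measurable. Let x ∈ M_{n,m}, z ∈ M_{n−k,m}, and set s = z′z. Then one has the identity in [0,∞]: ∫_{O(n)} ∫_{M_{k,m}} f(γ·[ω ; lower(γ′x) + z]) dω dγ = ∫_{M_{k,m}} ( ∫_{O(n)} f(x + γ·v₀·(s + ω′ω)^{1/2}) dγ ) dω, where v₀ ∈ M_{n,m} is the matrix whose last m rows form I_m and whose first n−m rows are 0, and (·)^{1/2} is the positive semidefinite square root. (The left side is the shifted dual Radon transform at x, at matrix distance s^{1/2}, of the Radon transform of f; the right side is π^{km/2} times the Gårding–Gindikin integral I₋^{k/2} of the matrix spherical means r ↦ (M_r f)(x) evaluated at s; in particular the left side depends on z only through s = z′z.) -/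

import Mathlib

open MeasureTheory Matrix
open scoped ENNReal

/-- Lebesgue measure on the space of real `p × q` matrices, identified with `ℝ^{pq}`. -/
noncomputable instance matMS (p q : ℕ) : MeasureSpace (Matrix (Fin p) (Fin q) ℝ) :=
  (inferInstance : MeasureSpace (Fin p → Fin q → ℝ))

/-- Block matrix whose first `k` rows are `ω` and last `n - k` rows are `t`. -/
def blockRows {n k m : ℕ} (ω : Matrix (Fin k) (Fin m) ℝ)
    (t : Matrix (Fin (n - k)) (Fin m) ℝ) : Matrix (Fin n) (Fin m) ℝ :=
  fun i j =>
    if h : (i : ℕ) < k then ω ⟨i, h⟩ j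
    else t ⟨(i : ℕ) - k, by have := i.isLt; omega⟩ j

/-- The matrix formed by the last `n - k` rows of `y`. -/
def lowerRows {n m : ℕ} (k : ℕ) (y : Matrix (Fin n) (Fin m) ℝ) :
    Matrix (Fin (n - k)) (Fin m) ℝ :=
  fun i j => y ⟨k + i, by have := i.isLt; omega⟩ j

/-- The Siegel gamma function `Γ_m(α) = π^{m(m-1)/4} ∏_{j=0}^{m-1} Γ(α - j/2)`. -/
noncomputable def SiegelGamma (m : ℕ) (α : ℝ) : ℝ :=
  Real.pi ^ ((m : ℝ) * ((m : ℝ) - 1) / 4) * ∏ j ∈ Finset.range m, Real.Gamma (α - (j : ℝ) / 2)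

/-- The `n × m` matrix whose last `m` rows form `I_m` and whose first `n - m` rows are `0`. -/
def v0 (n m : ℕ) : Matrix (Fin n) (Fin m) ℝ :=
  fun i j => if (i : ℕ) = n - m + (j : ℕ) then 1 else 0

open Classical in
/-- The positive semidefinite square root (junk value `0` off the psd cone). -/
noncomputable def psdSqrt {m : ℕ} (A : Matrix (Fin m) (Fin m) ℝ) :
    Matrix (Fin m) (Fin m) ℝ :=
  if h : A.PosSemidef then
    h.1.eigenvectorUnitary.1 * diagonal ((↑) ∘ Real.sqrt ∘ h.1.eigenvalues) *
      (star h.1.eigenvectorUnitary : Matrix (Fin m) (Fin m) ℝ)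
  else 0

/-! ### Auxiliary measurability lemmas -/

section AuxMeas

lemma meas_entry {p q : ℕ} (i : Fin p) (j : Fin q) :
    Measurable fun M : Matrix (Fin p) (Fin q) ℝ => M i j :=
  (measurable_pi_apply j).comp (measurable_pi_apply i)

lemma meas_matrix {α : Type*} [MeasurableSpace α] {p q : ℕ}
    {F : α → Matrix (Fin p) (Fin q) ℝ} (h : ∀ i j, Measurable fun a => F a i j) :
    Measurable F :=
  measurable_pi_lambda _ fun i => measurable_pi_lambda _ fun j => h i j

lemma meas_mul {α : Type*} [MeasurableSpace α] {p q r : ℕ}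
    {F : α → Matrix (Fin p) (Fin q) ℝ} {G : α → Matrix (Fin q) (Fin r) ℝ}
    (hF : Measurable F) (hG : Measurable G) :
    Measurable fun a => F a * G a := by
  apply meas_matrix
  intro i j
  have : (fun a => (F a * G a) i j) = fun a => ∑ l, F a i l * G a l j := by
    funext a; rw [Matrix.mul_apply]
  rw [this]
  exact Finset.measurable_sum _ fun l _ =>
    ((meas_entry i l).comp hF).mul ((meas_entry l j).comp hG)

lemma meas_const_add {α : Type*} [MeasurableSpace α] {p q : ℕ}
    (C : Matrix (Fin p) (Fin q) ℝ) {F : α → Matrix (Fin p) (Fin q) ℝ}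
    (hF : Measurable F) : Measurable fun a => C + F a := by
  apply meas_matrix
  intro i j
  have : (fun a => (C + F a) i j) = fun a => C i j + F a i j := rfl
  rw [this]
  exact measurable_const.add ((meas_entry i j).comp hF)

lemma meas_blockRows {n k m : ℕ} (z : Matrix (Fin (n - k)) (Fin m) ℝ) :
    Measurable fun ω : Matrix (Fin k) (Fin m) ℝ =>
      (blockRows ω z : Matrix (Fin n) (Fin m) ℝ) := by
  apply meas_matrix
  intro i j
  by_cases h : (i : ℕ) < k
  · have e : (fun ω : Matrix (Fin k) (Fin m) ℝ => blockRows ω z i j)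
        = fun ω => ω ⟨i, h⟩ j := funext fun ω => dif_pos h
    rw [e]; exact meas_entry _ _
  · have e : (fun ω : Matrix (Fin k) (Fin m) ℝ => blockRows ω z i j)
        = fun _ => z ⟨(i : ℕ) - k, by have := i.isLt; omega⟩ j := funext fun ω => dif_neg h
    rw [e]; exact measurable_const

instance OGmul (nn : ℕ) : MeasurableMul₂ (Matrix.orthogonalGroup (Fin nn) ℝ) := by
  constructor
  apply Measurable.subtype_mk
  show Measurable fun p : Matrix.orthogonalGroup (Fin nn) ℝ ×
      Matrix.orthogonalGroup (Fin nn) ℝ => (p.1.1 * p.2.1 : Matrix (Fin nn) (Fin nn) ℝ)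
  exact meas_mul (measurable_subtype_coe.comp measurable_fst)
    (measurable_subtype_coe.comp measurable_snd)

instance OGinv (nn : ℕ) : MeasurableInv (Matrix.orthogonalGroup (Fin nn) ℝ) := by
  constructor
  apply Measurable.subtype_mk
  show Measurable fun p : Matrix.orthogonalGroup (Fin nn) ℝ => (p.1)ᵀ
  exact meas_matrix fun i j => (meas_entry j i).comp measurable_subtype_coe

instance matSF (p q : ℕ) : SigmaFinite (volume : Measure (Matrix (Fin p) (Fin q) ℝ)) :=
  (inferInstance : SigmaFinite (volume : Measure (Fin p → Fin q → ℝ)))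

lemma lint_shift {p q : ℕ} (g : Matrix (Fin p) (Fin q) ℝ → ℝ≥0∞)
    (c : Matrix (Fin p) (Fin q) ℝ) :
    ∫⁻ ω, g (ω + c) = ∫⁻ ω, g ω :=
  lintegral_add_right_eq_self (μ := (volume : Measure (Fin p → Fin q → ℝ))) g c

end AuxMeas

/-! ### Right invariance of a left invariant probability measure -/

lemma lint_mul_right {G : Type*} [Group G] [MeasurableSpace G] [MeasurableMul₂ G]
    [MeasurableInv G] (μ : Measure G) [IsProbabilityMeasure μ] [μ.IsMulLeftInvariant]
    {g : G → ℝ≥0∞} (hg : Measurable g) (c : G) :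
    ∫⁻ γ, g (γ * c) ∂μ = ∫⁻ γ, g γ ∂μ := by
  set ν : Measure G := Measure.map Inv.inv μ with hν
  have hνprob : IsProbabilityMeasure ν := Measure.isProbabilityMeasure_map measurable_inv.aemeasurable
  have claim1 : ∀ {h : G → ℝ≥0∞}, Measurable h → ∀ c : G,
      ∫⁻ x, h (x * c) ∂ν = ∫⁻ x, h x ∂ν := by
    intro h hh c
    rw [hν, lintegral_map (f := fun x => h (x * c)) (hh.comp (measurable_mul_const c))
        measurable_inv, lintegral_map hh measurable_inv]
    have e : ∀ x : G, x⁻¹ * c = (c⁻¹ * x)⁻¹ := by intro x; group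
    show ∫⁻ x, h (x⁻¹ * c) ∂μ = _
    simp_rw [e]
    exact lintegral_mul_left_eq_self (fun x => h x⁻¹) c⁻¹
  have claim2 : ∀ {h : G → ℝ≥0∞}, Measurable h → ∫⁻ x, h x ∂μ = ∫⁻ x, h x ∂ν := by
    intro h hh
    have jm : Measurable (Function.uncurry fun (β : G) (γ : G) => h (β * γ)) :=
      hh.comp measurable_mul
    have inner1 : ∀ β : G, ∫⁻ γ, h (β * γ) ∂μ = ∫⁻ x, h x ∂μ := fun β =>
      lintegral_mul_left_eq_self h β
    calc ∫⁻ x, h x ∂μ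
        = ∫⁻ β, ∫⁻ γ, h (β * γ) ∂μ ∂ν := by
          simp_rw [inner1]; simp
      _ = ∫⁻ γ, ∫⁻ β, h (β * γ) ∂ν ∂μ := lintegral_lintegral_swap jm.aemeasurable
      _ = ∫⁻ γ, ∫⁻ x, h x ∂ν ∂μ := by
          congr 1; ext γ
          exact claim1 hh γ
      _ = ∫⁻ x, h x ∂ν := by simp
  calc ∫⁻ γ, g (γ * c) ∂μ
      = ∫⁻ γ, g (γ * c) ∂ν := claim2 (hg.comp (measurable_mul_const c))
    _ = ∫⁻ γ, g γ ∂ν := claim1 hg c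
    _ = ∫⁻ γ, g γ ∂μ := (claim2 hg).symm

/-! ### Two matrices with equal Gram matrices differ by an orthogonal matrix -/

open scoped RealInnerProductSpace in
lemma gram_exists_orthogonal {n m : ℕ} (A B : Matrix (Fin n) (Fin m) ℝ)
    (h : Aᵀ * A = Bᵀ * B) :
    ∃ U : Matrix (Fin n) (Fin n) ℝ, U ∈ Matrix.orthogonalGroup (Fin n) ℝ ∧ U * A = B := by
  classical
  set E := EuclideanSpace ℝ (Fin n) with hE
  set F := EuclideanSpace ℝ (Fin m) with hF
  set TA : F →ₗ[ℝ] E := Matrix.toEuclideanLin A with hTA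
  set TB : F →ₗ[ℝ] E := Matrix.toEuclideanLin B with hTB
  have key : ∀ v w : F, ⟪TA v, TA w⟫ = ⟪TB v, TB w⟫ := by
    intro v w
    have dp : ∀ C : Matrix (Fin n) (Fin m) ℝ, ∀ v w : Fin m → ℝ,
        (C *ᵥ v) ⬝ᵥ (C *ᵥ w) = v ⬝ᵥ ((Cᵀ * C) *ᵥ w) := by
      intro C v w
      rw [← Matrix.mulVec_mulVec, Matrix.dotProduct_mulVec v Cᵀ, Matrix.vecMul_transpose]
    have h1 : ∀ C : Matrix (Fin n) (Fin m) ℝ,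
        ⟪Matrix.toEuclideanLin C v, Matrix.toEuclideanLin C w⟫
          = (C *ᵥ (WithLp.equiv 2 _ v)) ⬝ᵥ (C *ᵥ (WithLp.equiv 2 _ w)) := by
      intro C
      rw [PiLp.inner_apply]
      simp [Matrix.toEuclideanLin_apply, dotProduct, mul_comm]
    rw [hTA, hTB, h1 A, h1 B, dp A, dp B, h]
  have hker : LinearMap.ker TA ≤ LinearMap.ker TB := by
    intro v hv
    rw [LinearMap.mem_ker] at hv ⊢
    have h0 : ⟪TB v, TB v⟫ = 0 := by rw [← key]; simp [hv]
    exact inner_self_eq_zero.mp h0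
  have normAB : ∀ v : F, ‖TB v‖ = ‖TA v‖ := by
    intro v
    have := key v v
    rw [real_inner_self_eq_norm_mul_norm, real_inner_self_eq_norm_mul_norm] at this
    nlinarith [norm_nonneg (TA v), norm_nonneg (TB v)]
  set S := LinearMap.range TA with hS
  set ψ : (F ⧸ LinearMap.ker TA) →ₗ[ℝ] E := (LinearMap.ker TA).liftQ TB hker with hψ
  set e := TA.quotKerEquivRange with he
  set φ₀ : S →ₗ[ℝ] E := ψ ∘ₗ (e.symm : S →ₗ[ℝ] (F ⧸ LinearMap.ker TA)) with hφ₀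
  have apply_eq : ∀ v : F, φ₀ ⟨TA v, LinearMap.mem_range_self _ v⟩ = TB v := by
    intro v
    show ψ (e.symm ⟨TA v, LinearMap.mem_range_self _ v⟩) = TB v
    rw [he, LinearMap.quotKerEquivRange_symm_apply_image]
    exact Submodule.liftQ_apply _ TB v
  have norm_map : ∀ s : S, ‖φ₀ s‖ = ‖s‖ := by
    rintro ⟨sv, v, hv⟩
    have hseq : (⟨sv, v, hv⟩ : S) = ⟨TA v, LinearMap.mem_range_self _ v⟩ :=
      Subtype.ext hv.symm
    rw [hseq, apply_eq v]
    rw [show ‖(⟨TA v, LinearMap.mem_range_self _ v⟩ : S)‖ = ‖TA v‖ from rfl]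
    exact normAB v
  set φ : S →ₗᵢ[ℝ] E := ⟨φ₀, norm_map⟩ with hφ
  set Φ := φ.extend with hΦ
  have Φ_apply : ∀ v : F, Φ (TA v) = TB v := by
    intro v
    have h1 : (TA v : E) = ((⟨TA v, LinearMap.mem_range_self _ v⟩ : S) : E) := rfl
    rw [h1, LinearIsometry.extend_apply]
    exact apply_eq v
  set M : Matrix (Fin n) (Fin n) ℝ := Matrix.toEuclideanLin.symm Φ.toLinearMap with hM
  have hMΦ : ∀ v : E, Matrix.toEuclideanLin M v = Φ v := by
    intro v
    rw [hM, LinearEquiv.apply_symm_apply]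
    rfl
  have hMeq : ∀ i j, M i j = Φ (EuclideanSpace.single j (1 : ℝ)) i := by
    intro i j
    rw [← hMΦ]
    rw [Matrix.toEuclideanLin_apply]
    simp [Matrix.mulVec_single]
  have orth : M ∈ Matrix.orthogonalGroup (Fin n) ℝ := by
    rw [Matrix.mem_orthogonalGroup_iff']
    ext i j
    have hinner := Φ.inner_map_map (EuclideanSpace.single i (1 : ℝ)) (EuclideanSpace.single j 1)
    rw [PiLp.inner_apply] at hinner
    simp only [RCLike.inner_apply, starRingEnd_apply, star_trivial] at hinner
    have hterm : ∀ kk, Φ (EuclideanSpace.single i (1 : ℝ)) kk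
          * Φ (EuclideanSpace.single j (1 : ℝ)) kk = M kk i * M kk j := by
      intro kk; rw [hMeq kk i, hMeq kk j]
    rw [Fintype.sum_congr _ _ (fun kk => (mul_comm _ _).trans (hterm kk))] at hinner
    rw [Matrix.mul_apply]
    simp only [Matrix.transpose_apply]
    rw [hinner, EuclideanSpace.inner_single_left]
    simp [EuclideanSpace.single_apply, Matrix.one_apply, eq_comm]
  have final : M * A = B := by
    apply Matrix.toEuclideanLin.injective
    apply LinearMap.ext
    intro v
    have h1 : Matrix.toEuclideanLin (M * A) v = Matrix.toEuclideanLin M (TA v) := by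
      rw [Matrix.toEuclideanLin_apply, Matrix.toEuclideanLin_apply, ← Matrix.mulVec_mulVec]
      rfl
    rw [h1, hMΦ, Φ_apply]
  exact ⟨M, orth, final⟩

/-! ### Algebraic identities -/

lemma v0_transpose_mul_v0 {n m : ℕ} (hmn : m ≤ n) : (v0 n m)ᵀ * v0 n m = 1 := by
  classical
  ext a b
  rw [Matrix.mul_apply]
  have ha : n - m + (a : ℕ) < n := by have := a.isLt; omega
  rw [Finset.sum_eq_single (⟨n - m + (a : ℕ), ha⟩ : Fin n)]
  · simp only [Matrix.transpose_apply, v0, Matrix.one_apply]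
    by_cases hab : a = b
    · subst hab; simp
    · have hne : ¬ (n - m + (a : ℕ) = n - m + (b : ℕ)) := by
        have : (a : ℕ) ≠ (b : ℕ) := fun hc => hab (Fin.ext hc)
        omega
      simp [hne, hab, Fin.val_inj]
  · intro i _ hi
    simp only [Matrix.transpose_apply, v0]
    have hne : ¬ ((i : ℕ) = n - m + (a : ℕ)) := fun hh => hi (Fin.ext hh)
    rw [if_neg hne, zero_mul]
  · intro hmem
    exact absurd (Finset.mem_univ _) hmem

lemma blockRows_gram {n k m : ℕ} (hkn : k ≤ n) (ω : Matrix (Fin k) (Fin m) ℝ)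
    (z : Matrix (Fin (n - k)) (Fin m) ℝ) :
    (blockRows ω z : Matrix (Fin n) (Fin m) ℝ)ᵀ * blockRows ω z = zᵀ * z + ωᵀ * ω := by
  classical
  ext a b
  rw [Matrix.mul_apply]
  set Bz : Matrix (Fin n) (Fin m) ℝ := blockRows ω z with hBz
  set G : ℕ → ℝ := fun i => if h : i < n then Bz ⟨i, h⟩ a * Bz ⟨i, h⟩ b else 0 with hG
  have hsum : ∑ i : Fin n, Bzᵀ a i * Bz i b = ∑ i ∈ Finset.range n, G i := by
    rw [← Fin.sum_univ_eq_sum_range G n]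
    apply Finset.sum_congr rfl
    intro i _
    simp only [hG, Matrix.transpose_apply]
    rw [dif_pos i.isLt]
  rw [hsum]
  have hsplit : ∑ i ∈ Finset.range n, G i
      = ∑ i ∈ Finset.range k, G i + ∑ i ∈ Finset.Ico k n, G i := by
    rw [Finset.range_eq_Ico, ← Finset.sum_Ico_consecutive _ (Nat.zero_le k) hkn, Finset.range_eq_Ico]
  rw [hsplit]
  have h1 : ∑ i ∈ Finset.range k, G i = (ωᵀ * ω) a b := by
    rw [Matrix.mul_apply, ← Fin.sum_univ_eq_sum_range G k]
    apply Finset.sum_congr rfl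
    intro j _
    have hjk : (j : ℕ) < k := j.isLt
    have hjn : (j : ℕ) < n := lt_of_lt_of_le hjk hkn
    simp only [hG, Matrix.transpose_apply]
    rw [dif_pos hjn]
    have : ∀ c : Fin m, Bz ⟨(j : ℕ), hjn⟩ c = ω j c := by
      intro c
      show blockRows ω z ⟨(j : ℕ), hjn⟩ c = ω j c
      rw [show blockRows ω z ⟨(j : ℕ), hjn⟩ c = ω ⟨(j : ℕ), hjk⟩ c from dif_pos hjk]
    rw [this a, this b]
  have h2 : ∑ i ∈ Finset.Ico k n, G i = (zᵀ * z) a b := by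
    rw [Finset.sum_Ico_eq_sum_range]
    rw [Matrix.mul_apply, ← Fin.sum_univ_eq_sum_range (fun i => G (k + i)) (n - k)]
    apply Finset.sum_congr rfl
    intro j _
    have hjnk : (j : ℕ) < n - k := j.isLt
    have hjn : k + (j : ℕ) < n := by omega
    have hnotlt : ¬ (k + (j : ℕ) < k) := by omega
    simp only [hG, Matrix.transpose_apply]
    rw [dif_pos hjn]
    have : ∀ c : Fin m, Bz ⟨k + (j : ℕ), hjn⟩ c = z j c := by
      intro c
      show blockRows ω z ⟨k + (j : ℕ), hjn⟩ c = z j c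
      rw [show blockRows ω z ⟨k + (j : ℕ), hjn⟩ c
          = z ⟨k + (j : ℕ) - k, by omega⟩ c from dif_neg hnotlt]
      congr 1
      exact Fin.ext (by show k + (j : ℕ) - k = (j : ℕ); omega)
    rw [this a, this b]
  rw [h1, h2, Matrix.add_apply]
  ring

lemma blockRows_decomp {n k m : ℕ} (hkn : k ≤ n) (y : Matrix (Fin n) (Fin m) ℝ)
    (ω : Matrix (Fin k) (Fin m) ℝ) (z : Matrix (Fin (n - k)) (Fin m) ℝ) :
    (blockRows ω (lowerRows k y + z) : Matrix (Fin n) (Fin m) ℝ)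
      = blockRows (ω - Matrix.of fun (i : Fin k) (j : Fin m) =>
            y ⟨i.1, lt_of_lt_of_le i.isLt hkn⟩ j) z + y := by
  classical
  funext i j
  show blockRows ω (lowerRows k y + z) i j
      = blockRows (ω - Matrix.of fun (i : Fin k) (j : Fin m) =>
          y ⟨i.1, lt_of_lt_of_le i.isLt hkn⟩ j) z i j + y i j
  by_cases h : (i : ℕ) < k
  · rw [show blockRows ω (lowerRows k y + z) i j = ω ⟨i, h⟩ j from dif_pos h,
      show blockRows (ω - Matrix.of fun (i : Fin k) (j : Fin m) =>
          y ⟨i.1, lt_of_lt_of_le i.isLt hkn⟩ j) z i j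
        = (ω - Matrix.of fun (i : Fin k) (j : Fin m) =>
            y ⟨i.1, lt_of_lt_of_le i.isLt hkn⟩ j) ⟨i, h⟩ j from dif_pos h]
    rw [Matrix.sub_apply, Matrix.of_apply]
    have hidx : (⟨((⟨i, h⟩ : Fin k) : ℕ), lt_of_lt_of_le (⟨i, h⟩ : Fin k).isLt hkn⟩ : Fin n)
        = i := Fin.ext rfl
    rw [hidx]
    ring
  · have hik : (i : ℕ) - k < n - k := by have := i.isLt; omega
    rw [show blockRows ω (lowerRows k y + z) i j
        = (lowerRows k y + z) ⟨(i : ℕ) - k, by have := i.isLt; omega⟩ j from dif_neg h,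
      show blockRows (ω - Matrix.of fun (i : Fin k) (j : Fin m) =>
          y ⟨i.1, lt_of_lt_of_le i.isLt hkn⟩ j) z i j
        = z ⟨(i : ℕ) - k, by have := i.isLt; omega⟩ j from dif_neg h]
    rw [Matrix.add_apply]
    show y ⟨k + ((i : ℕ) - k), _⟩ j + z _ j = _
    have h' : k ≤ (i : ℕ) := le_of_not_gt h
    have hidx : (⟨k + ((i : ℕ) - k), by have := i.isLt; omega⟩ : Fin n) = i :=
      Fin.ext (by show k + ((i : ℕ) - k) = (i : ℕ); omega)
    rw [hidx]
    ring

/-- The shifted dual Radon transform of the Radon transform of `f`, at matrix distance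
`(z′z)^{1/2}`, equals the Gårding–Gindikin integral `I₋^{k/2}` of the matrix spherical
means of `f`. `μ` is the Haar probability measure on `O(n)`. -/
theorem shifted_dual_radon (n m k : ℕ) (hm : 1 ≤ m) (hk : 1 ≤ k) (hkn : k ≤ n - m)
    (f : Matrix (Fin n) (Fin m) ℝ → ℝ≥0∞) (hf : Measurable f)
    (x : Matrix (Fin n) (Fin m) ℝ) (z : Matrix (Fin (n - k)) (Fin m) ℝ)
    (μ : Measure (Matrix.orthogonalGroup (Fin n) ℝ)) [IsProbabilityMeasure μ]
    [μ.IsMulLeftInvariant] :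
    (∫⁻ γ, (∫⁻ ω : Matrix (Fin k) (Fin m) ℝ,
        f (γ.1 * blockRows ω (lowerRows k (γ.1ᵀ * x) + z))) ∂μ)
      = ∫⁻ ω : Matrix (Fin k) (Fin m) ℝ,
          ∫⁻ γ, f (x + γ.1 * v0 n m * psdSqrt (zᵀ * z + ωᵀ * ω)) ∂μ := by
  classical
  haveI hsf : SFinite μ := by
    set_option synthInstance.maxHeartbeats 1000000 in
    exact inferInstance
  have hmn : m ≤ n := by omega
  have hkn' : k ≤ n := by omega
  -- Step 1: rewrite the inner integral using translation invariance
  have step1 : ∀ γ : Matrix.orthogonalGroup (Fin n) ℝ,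
      (∫⁻ ω : Matrix (Fin k) (Fin m) ℝ,
          f (γ.1 * blockRows ω (lowerRows k (γ.1ᵀ * x) + z)))
        = ∫⁻ ω : Matrix (Fin k) (Fin m) ℝ, f (x + γ.1 * blockRows ω z) := by
    intro γ
    have ggt : γ.1 * γ.1ᵀ = 1 := by
      have h2 := γ.2
      rw [Matrix.mem_orthogonalGroup_iff] at h2
      exact h2
    have hdec : ∀ ω : Matrix (Fin k) (Fin m) ℝ,
        γ.1 * blockRows ω (lowerRows k (γ.1ᵀ * x) + z)
          = x + γ.1 * blockRows (ω - Matrix.of fun (i : Fin k) (j : Fin m) =>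
              (γ.1ᵀ * x) ⟨i.1, lt_of_lt_of_le i.isLt hkn'⟩ j) z := by
      intro ω
      rw [blockRows_decomp hkn' (γ.1ᵀ * x) ω z, Matrix.mul_add, ← Matrix.mul_assoc, ggt,
        Matrix.one_mul]
      exact add_comm _ x
    simp_rw [hdec]
    have hshift := lint_shift (fun ω => f (x + γ.1 * blockRows ω z))
      (-(Matrix.of fun (i : Fin k) (j : Fin m) =>
          (γ.1ᵀ * x) ⟨i.1, lt_of_lt_of_le i.isLt hkn'⟩ j))
    simp_rw [← sub_eq_add_neg] at hshift
    exact hshift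
  -- Step 2: interchange the two integrals
  have meas_inner : Measurable (Function.uncurry fun (γ : Matrix.orthogonalGroup (Fin n) ℝ)
      (ω : Matrix (Fin k) (Fin m) ℝ) => f (x + γ.1 * blockRows ω z)) := by
    apply hf.comp
    apply meas_const_add
    exact meas_mul (measurable_subtype_coe.comp measurable_fst)
      ((meas_blockRows z).comp measurable_snd)
  -- Step 3: pointwise identification via the Gram lemma and right invariance
  have step3 : ∀ ω : Matrix (Fin k) (Fin m) ℝ,
      (∫⁻ γ, f (x + γ.1 * blockRows ω z) ∂μ)
        = ∫⁻ γ, f (x + γ.1 * v0 n m * psdSqrt (zᵀ * z + ωᵀ * ω)) ∂μ := by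
    intro ω
    set s : Matrix (Fin m) (Fin m) ℝ := zᵀ * z + ωᵀ * ω with hs
    have hspsd : s.PosSemidef := by
      have h1 := Matrix.posSemidef_conjTranspose_mul_self z
      have h2 := Matrix.posSemidef_conjTranspose_mul_self ω
      exact Matrix.PosSemidef.add h1 h2
    have hq : psdSqrt s = hspsd.1.eigenvectorUnitary.1 * diagonal (fun i => Real.sqrt (hspsd.1.eigenvalues i)) * (hspsd.1.eigenvectorUnitary.1)ᵀ := by
      rw [psdSqrt, dif_pos hspsd, star_eq_conjTranspose, conjTranspose_eq_transpose_of_trivial]; rfl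
    have hUU : (hspsd.1.eigenvectorUnitary.1)ᵀ * hspsd.1.eigenvectorUnitary.1 = 1 := by
      have := Unitary.coe_star_mul_self hspsd.1.eigenvectorUnitary
      rwa [star_eq_conjTranspose, conjTranspose_eq_transpose_of_trivial] at this
    have hspec : s = hspsd.1.eigenvectorUnitary.1 * diagonal (fun i => hspsd.1.eigenvalues i) * (hspsd.1.eigenvectorUnitary.1)ᵀ := by
      conv_lhs => rw [hspsd.1.spectral_theorem]
      rw [Unitary.conjStarAlgAut_apply, star_eq_conjTranspose, conjTranspose_eq_transpose_of_trivial]; rfl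
    have hss : psdSqrt s * psdSqrt s = s := by
      rw [hq]
      conv_rhs => rw [hspec]
      have e : ∀ (U D : Matrix (Fin m) (Fin m) ℝ), U * D * Uᵀ * (U * D * Uᵀ) = U * (D * (Uᵀ * U) * D) * Uᵀ := by
        intro U D; simp only [Matrix.mul_assoc]
      rw [e, hUU, Matrix.mul_one, diagonal_mul_diagonal]
      congr 3
      funext i
      exact Real.mul_self_sqrt (hspsd.eigenvalues_nonneg i)
    set A : Matrix (Fin n) (Fin m) ℝ := v0 n m * psdSqrt s with hA
    have hqt : (psdSqrt s)ᵀ = psdSqrt s := by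
      rw [hq, transpose_mul, transpose_mul, transpose_transpose, diagonal_transpose, mul_assoc]
    have hAA : Aᵀ * A = s := by
      rw [hA, Matrix.transpose_mul, Matrix.mul_assoc, ← Matrix.mul_assoc (v0 n m)ᵀ,
        v0_transpose_mul_v0 hmn, Matrix.one_mul, hqt]
      exact hss
    have hBB : (blockRows ω z : Matrix (Fin n) (Fin m) ℝ)ᵀ * blockRows ω z = s :=
      blockRows_gram hkn' ω z
    obtain ⟨U, hU, hUA⟩ := gram_exists_orthogonal A (blockRows ω z) (by rw [hAA, hBB])
    set u : Matrix.orthogonalGroup (Fin n) ℝ := ⟨U, hU⟩ with husub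
    have hrw : ∀ γ : Matrix.orthogonalGroup (Fin n) ℝ,
        x + γ.1 * blockRows ω z = x + (γ * u).1 * A := by
      intro γ
      rw [← hUA]
      show x + γ.1 * (U * A) = x + (γ.1 * U) * A
      rw [Matrix.mul_assoc]
    simp_rw [hrw]
    have hg : Measurable fun γ : Matrix.orthogonalGroup (Fin n) ℝ => f (x + γ.1 * A) := by
      apply hf.comp
      apply meas_const_add
      exact meas_mul measurable_subtype_coe measurable_const
    have := lint_mul_right μ hg u
    rw [this]
    apply lintegral_congr
    intro γ
    rw [hA, ← Matrix.mul_assoc]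
  calc (∫⁻ γ, (∫⁻ ω : Matrix (Fin k) (Fin m) ℝ,
        f (γ.1 * blockRows ω (lowerRows k (γ.1ᵀ * x) + z))) ∂μ)
      = ∫⁻ γ, ∫⁻ ω : Matrix (Fin k) (Fin m) ℝ, f (x + γ.1 * blockRows ω z) ∂volume ∂μ :=
        lintegral_congr step1
    _ = ∫⁻ ω : Matrix (Fin k) (Fin m) ℝ, ∫⁻ γ, f (x + γ.1 * blockRows ω z) ∂μ ∂volume :=
        lintegral_lintegral_swap meas_inner.aemeasurable
    _ = ∫⁻ ω : Matrix (Fin k) (Fin m) ℝ,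
          ∫⁻ γ, f (x + γ.1 * v0 n m * psdSqrt (zᵀ * z + ωᵀ * ω)) ∂μ :=
        lintegral_congr step3
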